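/- arXiv:2210.11437 — 2 statements merged into one kernel-verified Lean document; each statement's English description precedes it below -/
import Mathlib

section
/- Let s > 1. There exists a constant C > 0 such that for every N > 0, t ≥ 0 and every Schwartz function f on ℝ², ∫_{ℝ²} e^{−N t ξ₁²/|ξ|²} |f(ξ)| dξ ≤ C (1+Nt)^{−1/4} ‖f‖_{H^s(ℝ²)}. -/
/-!
Cauchy–Schwarz against the weight `(1 + |ξ|²)^s` reduces the estimate to
`∫ e^{-2τ ξ₁²/|ξ|²} (1 + |ξ|²)^{-s} dξ ≲ (1 + τ)^{-1/2}` with `τ = Nt`.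
Where `ξ₁² ≥ ξ₂²` the symbol is at most `e^{-τ/2}`; elsewhere it is at most the Gaussian
`e^{-τ ξ₁²/(2 ξ₂²)}`, whose `ξ₁`-integral is `√(2π/τ) |ξ₂|`, and `|ξ₂| (1 + ξ₂²)^{-s}` is
integrable because `s > 1`. For `τ ≤ 1` the trivial bound `e^{-τ ξ₁²/|ξ|²} ≤ 1` suffices.
-/

open MeasureTheory Real
open scoped ENNReal

theorem integral_mul_le_weighted_cauchy_schwarz {α : Type*} [MeasurableSpace α]
    {μ : Measure α} {K g w : α → ℝ} (hK : 0 ≤ K) (hg : 0 ≤ g) (hw : ∀ x, 0 < w x)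
    (hKm : Measurable K) (hgm : Measurable g) (hwm : Measurable w)
    (hKw : Integrable (fun x => K x ^ 2 / w x) μ)
    (hgw : Integrable (fun x => w x * g x ^ 2) μ) :
    ∫ x, K x * g x ∂μ ≤
      (∫ x, K x ^ 2 / w x ∂μ) ^ (1 / 2 : ℝ) *
        (∫ x, w x * g x ^ 2 ∂μ) ^ (1 / 2 : ℝ) := by
  have hu_sq : ∀ x, (K x / √(w x)) ^ 2 = K x ^ 2 / w x := fun x => by
    rw [div_pow, sq_sqrt (hw x).le]
  have hv_sq : ∀ x, (√(w x) * g x) ^ 2 = w x * g x ^ 2 := fun x => by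
    rw [mul_pow, sq_sqrt (hw x).le]
  have hprod : ∀ x, K x / √(w x) * (√(w x) * g x) = K x * g x := fun x => by
    field_simp [(sqrt_pos.2 (hw x)).ne']
  have hu : MemLp (fun x => K x / √(w x)) (ENNReal.ofReal 2) μ := by
    rw [ENNReal.ofReal_ofNat, memLp_two_iff_integrable_sq
      (by fun_prop : Measurable fun x => K x / √(w x)).aestronglyMeasurable]
    simpa only [hu_sq] using hKw
  have hv : MemLp (fun x => √(w x) * g x) (ENNReal.ofReal 2) μ := by
    rw [ENNReal.ofReal_ofNat, memLp_two_iff_integrable_sq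
      (by fun_prop : Measurable fun x => √(w x) * g x).aestronglyMeasurable]
    simpa only [hv_sq] using hgw
  have holder := integral_mul_le_Lp_mul_Lq_of_nonneg Real.HolderConjugate.two_two
    (Filter.Eventually.of_forall fun x => div_nonneg (hK x) (sqrt_nonneg _))
    (Filter.Eventually.of_forall fun x => mul_nonneg (sqrt_nonneg _) (hg x)) hu hv
  simpa only [hprod, rpow_two, hu_sq, hv_sq] using holder

section JapaneseBracket

variable {E : Type*} [NormedAddCommGroup E] [NormedSpace ℝ E] [FiniteDimensional ℝ E]
  [MeasurableSpace E] [BorelSpace E] {μ : Measure E} [μ.IsAddHaarMeasure] {s : ℝ}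

theorem integrable_one_add_norm_sq_rpow_neg (hs : (Module.finrank ℝ E : ℝ) < 2 * s) :
    Integrable (fun x : E => (1 + ‖x‖ ^ 2) ^ (-s)) μ := by
  simpa only [neg_div, mul_div_cancel_left₀ s two_ne_zero] using
    integrable_rpow_neg_one_add_norm_sq (μ := μ) hs

theorem integrable_norm_mul_one_add_norm_sq_rpow_neg
    (hs : (Module.finrank ℝ E : ℝ) + 1 < 2 * s) :
    Integrable (fun x : E => ‖x‖ * (1 + ‖x‖ ^ 2) ^ (-s)) μ := by
  refine (integrable_rpow_neg_one_add_norm_sq (μ := μ) (r := 2 * s - 1) (by linarith)).mono'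
    (by fun_prop) (Filter.Eventually.of_forall fun x => ?_)
  have hnorm : ‖x‖ ≤ (1 + ‖x‖ ^ 2) ^ (1 / 2 : ℝ) := by
    rw [← sqrt_eq_rpow]
    exact le_sqrt_of_sq_le (by linarith)
  calc ‖‖x‖ * (1 + ‖x‖ ^ 2) ^ (-s)‖ = ‖x‖ * (1 + ‖x‖ ^ 2) ^ (-s) :=
        norm_of_nonneg (by positivity)
    _ ≤ (1 + ‖x‖ ^ 2) ^ (1 / 2 : ℝ) * (1 + ‖x‖ ^ 2) ^ (-s) := by gcongr
    _ = (1 + ‖x‖ ^ 2) ^ (-(2 * s - 1) / 2) := by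
      rw [← rpow_add (by positivity)]
      ring_nf

end JapaneseBracket

theorem SchwartzMap.integrable_one_add_norm_sq_rpow_mul_norm_sq {E F : Type*}
    [NormedAddCommGroup E] [NormedSpace ℝ E] [MeasurableSpace E] [BorelSpace E]
    [SecondCountableTopology E] [NormedAddCommGroup F] [NormedSpace ℝ F]
    {μ : Measure E} [μ.HasTemperateGrowth] (f : SchwartzMap E F) (s : ℝ) :
    Integrable (fun x => (1 + ‖x‖ ^ 2) ^ s * ‖f x‖ ^ 2) μ := by
  set n := ⌈s⌉₊
  have hbound : ∀ x, ‖(1 + ‖x‖ ^ 2) ^ s * ‖f x‖‖ ≤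
      2 ^ (2 * n) * (Finset.Iic (2 * n, 0)).sup (fun m => SchwartzMap.seminorm ℝ m.1 m.2) f := by
    intro x
    have hweight : (1 + ‖x‖ ^ 2) ^ s ≤ (1 + ‖x‖) ^ (2 * n) :=
      calc (1 + ‖x‖ ^ 2) ^ s ≤ (1 + ‖x‖ ^ 2) ^ (n : ℝ) :=
            rpow_le_rpow_of_exponent_le (by nlinarith [norm_nonneg x]) (Nat.le_ceil s)
        _ ≤ ((1 + ‖x‖) ^ 2) ^ n := by
            rw [rpow_natCast]
            exact pow_le_pow_left₀ (by positivity) (by nlinarith [norm_nonneg x]) n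
        _ = (1 + ‖x‖) ^ (2 * n) := by rw [← pow_mul]
    have hdecay := one_add_le_sup_seminorm_apply (𝕜 := ℝ) (m := (2 * n, 0)) le_rfl le_rfl f x
    rw [norm_iteratedFDeriv_zero] at hdecay
    rw [norm_mul, norm_norm, norm_of_nonneg (by positivity)]
    exact (mul_le_mul_of_nonneg_right hweight (norm_nonneg _)).trans hdecay
  have := (f.integrable (μ := μ)).norm.bdd_mul
    ((by fun_prop : Measurable fun x : E => (1 + ‖x‖ ^ 2) ^ s).mul
      f.continuous.norm.measurable).aestronglyMeasurable
    (Filter.Eventually.of_forall hbound)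
  simpa only [Pi.mul_apply, mul_assoc, ← sq] using this

theorem exp_neg_mul_sq_div_add_sq_le {τ : ℝ} (hτ : 0 ≤ τ) (x y : ℝ) :
    exp (-(τ * x ^ 2) / (x ^ 2 + y ^ 2)) ≤
      exp (-(τ / 2)) + exp (-(τ / 2 * x ^ 2) / y ^ 2) := by
  rcases le_or_gt (x ^ 2) (y ^ 2) with hxy | hxy
  · refine le_add_of_nonneg_of_le (exp_pos _).le (exp_le_exp.2 ?_)
    rcases eq_or_ne y 0 with rfl | hy
    · simp [show x = 0 by nlinarith [sq_nonneg x]]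
    rw [neg_div, neg_div, neg_le_neg_iff, div_le_div_iff₀ (by positivity) (by positivity)]
    nlinarith [mul_nonneg hτ (sq_nonneg x)]
  · refine le_add_of_le_of_nonneg (exp_le_exp.2 ?_) (exp_pos _).le
    rw [neg_div, neg_le_neg_iff, le_div_iff₀ (by nlinarith [sq_nonneg y])]
    nlinarith

theorem lintegral_exp_neg_mul_sq_div_sq {a : ℝ} (ha : 0 < a) {y : ℝ} (hy : y ≠ 0) :
    ∫⁻ x, ENNReal.ofReal (exp (-(a * x ^ 2) / y ^ 2)) = ENNReal.ofReal (√(π / a) * |y|) := by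
  have hscale : ∀ x, -(a * x ^ 2) / y ^ 2 = -(a / y ^ 2) * x ^ 2 := fun x => by ring
  simp_rw [hscale]
  rw [← ofReal_integral_eq_lintegral_ofReal (integrable_exp_neg_mul_sq (by positivity))
    (Filter.Eventually.of_forall fun x => (exp_pos _).le), integral_gaussian,
    div_div_eq_mul_div, mul_div_right_comm, sqrt_mul (by positivity), sqrt_sq_eq_abs]

theorem lintegral_prod_exp_neg_mul_sq_div_sq_mul {a : ℝ} (ha : 0 < a) (g : ℝ → ℝ≥0∞)
    (hg : Measurable g) :
    ∫⁻ p : ℝ × ℝ, ENNReal.ofReal (exp (-(a * p.1 ^ 2) / p.2 ^ 2)) * g p.2 =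
      ENNReal.ofReal √(π / a) * ∫⁻ y, ENNReal.ofReal |y| * g y := by
  rw [Measure.volume_eq_prod, lintegral_prod_symm _ (by fun_prop),
    ← lintegral_const_mul _ (by fun_prop)]
  refine lintegral_congr_ae ?_
  filter_upwards [Measure.ae_ne volume 0] with y hy
  rw [lintegral_mul_const _ (by fun_prop), lintegral_exp_neg_mul_sq_div_sq ha hy,
    ENNReal.ofReal_mul (sqrt_nonneg _), mul_assoc]

theorem EuclideanSpace.norm_sq_fin_two (ξ : EuclideanSpace ℝ (Fin 2)) :
    ‖ξ‖ ^ 2 = ξ 0 ^ 2 + ξ 1 ^ 2 := by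
  simp [EuclideanSpace.real_norm_sq_eq, Fin.sum_univ_two]

theorem EuclideanSpace.lintegral_fin_two (g : ℝ × ℝ → ℝ≥0∞) :
    ∫⁻ ξ : EuclideanSpace ℝ (Fin 2), g (ξ 0, ξ 1) = ∫⁻ p, g p :=
  ((volume_preserving_finTwoArrow ℝ).comp
    (EuclideanSpace.volume_preserving_symm_measurableEquiv_toLp (Fin 2))).lintegral_comp_emb
    ((MeasurableEquiv.toLp 2 (Fin 2 → ℝ)).symm.trans
      MeasurableEquiv.finTwoArrow).measurableEmbedding g

theorem lintegral_exp_neg_mul_sq_div_sq_mul_one_add_sq_rpow_neg {a s : ℝ} (ha : 0 < a)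
    (hs : 1 < s) :
    ∫⁻ ξ : EuclideanSpace ℝ (Fin 2),
        ENNReal.ofReal (exp (-(a * ξ 0 ^ 2) / ξ 1 ^ 2) * (1 + ξ 1 ^ 2) ^ (-s)) =
      ENNReal.ofReal (√(π / a) * ∫ y : ℝ, |y| * (1 + y ^ 2) ^ (-s)) := by
  have hJ : Integrable (fun y : ℝ => |y| * (1 + y ^ 2) ^ (-s)) := by
    simpa only [Real.norm_eq_abs, sq_abs] using
      integrable_norm_mul_one_add_norm_sq_rpow_neg (E := ℝ) (μ := volume)
        (by rw [Module.finrank_self]; push_cast; linarith)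
  simp_rw [ENNReal.ofReal_mul (exp_pos _).le]
  rw [EuclideanSpace.lintegral_fin_two
      (fun p => ENNReal.ofReal (exp (-(a * p.1 ^ 2) / p.2 ^ 2)) *
        ENNReal.ofReal ((1 + p.2 ^ 2) ^ (-s)))]
  refine (lintegral_prod_exp_neg_mul_sq_div_sq_mul ha
    (fun y => ENNReal.ofReal ((1 + y ^ 2) ^ (-s))) (by fun_prop)).trans ?_
  rw [ENNReal.ofReal_mul (sqrt_nonneg _),
    ofReal_integral_eq_lintegral_ofReal hJ (Filter.Eventually.of_forall fun y => by positivity)]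
  simp_rw [ENNReal.ofReal_mul (abs_nonneg _)]

theorem le_two_mul_add_mul_one_add_rpow_neg_half {V a b τ : ℝ} (ha : 0 ≤ a) (hb : 0 ≤ b)
    (hτ : 0 ≤ τ) (h₁ : V ≤ a) (h₂ : 0 < τ → V ≤ exp (-(τ / 2)) * a + b / √τ) :
    V ≤ 2 * (a + b) * (1 + τ) ^ (-(1 / 2) : ℝ) := by
  have hτ₁ : 0 < √(1 + τ) := sqrt_pos.2 (by linarith)
  rw [rpow_neg (by linarith), ← sqrt_eq_rpow, ← div_eq_mul_inv, le_div_iff₀ hτ₁]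
  rcases le_or_gt τ 1 with hτ_le | hτ_gt
  · have : √(1 + τ) ≤ 2 := sqrt_le_iff.2 ⟨by norm_num, by linarith⟩
    nlinarith
  · have hexp : exp (-(τ / 2)) * √(1 + τ) ≤ 1 := by
      rw [exp_neg, inv_mul_le_iff₀ (exp_pos _), mul_one, exp_half]
      exact sqrt_le_sqrt (by linarith [add_one_le_exp τ])
    have hratio : √(1 + τ) / √τ ≤ 2 := by
      rw [div_le_iff₀ (sqrt_pos.2 (by linarith))]
      calc √(1 + τ) ≤ √(2 ^ 2 * τ) := sqrt_le_sqrt (by linarith)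
        _ = 2 * √τ := by rw [sqrt_mul (by norm_num), sqrt_sq (by norm_num)]
    calc V * √(1 + τ) ≤ (exp (-(τ / 2)) * a + b / √τ) * √(1 + τ) :=
          mul_le_mul_of_nonneg_right (h₂ (by linarith)) hτ₁.le
      _ = (exp (-(τ / 2)) * √(1 + τ)) * a + (√(1 + τ) / √τ) * b := by ring
      _ ≤ 1 * a + 2 * b := by gcongr
      _ ≤ 2 * (a + b) := by linarith

/-- `e^{-τ ξ₁²/|ξ|²}` with `τ = Nt`; the paper's `ξ₁` is `ξ 0`. -/
noncomputable def propagatorSymbol (τ : ℝ) (ξ : EuclideanSpace ℝ (Fin 2)) : ℝ :=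
  exp (-(τ * ξ 0 ^ 2) / ‖ξ‖ ^ 2)

@[fun_prop]
theorem measurable_propagatorSymbol (τ : ℝ) : Measurable (propagatorSymbol τ) := by
  unfold propagatorSymbol
  fun_prop

theorem propagatorSymbol_pos (τ : ℝ) (ξ : EuclideanSpace ℝ (Fin 2)) :
    0 < propagatorSymbol τ ξ :=
  exp_pos _

theorem propagatorSymbol_le_one {τ : ℝ} (hτ : 0 ≤ τ) (ξ : EuclideanSpace ℝ (Fin 2)) :
    propagatorSymbol τ ξ ≤ 1 :=
  exp_le_one_iff.2 (div_nonpos_of_nonpos_of_nonneg (neg_nonpos.2 (by positivity)) (sq_nonneg _))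

theorem propagatorSymbol_sq (τ : ℝ) (ξ : EuclideanSpace ℝ (Fin 2)) :
    propagatorSymbol τ ξ ^ 2 = propagatorSymbol (2 * τ) ξ := by
  rw [propagatorSymbol, propagatorSymbol, ← exp_nat_mul]
  congr 1
  push_cast
  ring

section Decay

variable {s τ : ℝ}

theorem integrable_one_add_norm_sq_rpow_neg_fin_two (hs : 1 < s) :
    Integrable (fun ξ : EuclideanSpace ℝ (Fin 2) => (1 + ‖ξ‖ ^ 2) ^ (-s)) :=
  integrable_one_add_norm_sq_rpow_neg (by rw [finrank_euclideanSpace_fin]; push_cast; linarith)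

theorem propagatorSymbol_mul_le (hs : 0 ≤ s) (hτ : 0 ≤ τ) (ξ : EuclideanSpace ℝ (Fin 2)) :
    propagatorSymbol τ ξ * (1 + ‖ξ‖ ^ 2) ^ (-s) ≤
      exp (-(τ / 2)) * (1 + ‖ξ‖ ^ 2) ^ (-s) +
        exp (-(τ / 2 * ξ 0 ^ 2) / ξ 1 ^ 2) * (1 + ξ 1 ^ 2) ^ (-s) := by
  have hsymbol : propagatorSymbol τ ξ ≤
      exp (-(τ / 2)) + exp (-(τ / 2 * ξ 0 ^ 2) / ξ 1 ^ 2) := by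
    rw [propagatorSymbol, EuclideanSpace.norm_sq_fin_two]
    exact exp_neg_mul_sq_div_add_sq_le hτ _ _
  have hweight : (1 + ‖ξ‖ ^ 2) ^ (-s) ≤ (1 + ξ 1 ^ 2) ^ (-s) :=
    rpow_le_rpow_of_nonpos (by positivity)
      (by rw [EuclideanSpace.norm_sq_fin_two]; nlinarith [sq_nonneg (ξ 0)]) (by linarith)
  calc propagatorSymbol τ ξ * (1 + ‖ξ‖ ^ 2) ^ (-s)
      ≤ (exp (-(τ / 2)) + exp (-(τ / 2 * ξ 0 ^ 2) / ξ 1 ^ 2)) *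
          (1 + ‖ξ‖ ^ 2) ^ (-s) := by
        gcongr
    _ ≤ _ := by
        rw [add_mul]
        gcongr

theorem integrable_propagatorSymbol_mul (hs : 1 < s) (hτ : 0 ≤ τ) :
    Integrable (fun ξ => propagatorSymbol τ ξ * (1 + ‖ξ‖ ^ 2) ^ (-s)) :=
  (integrable_one_add_norm_sq_rpow_neg_fin_two hs).bdd_mul (c := 1) (by fun_prop)
    (Filter.Eventually.of_forall fun ξ => by
      rw [norm_of_nonneg (propagatorSymbol_pos τ ξ).le]
      exact propagatorSymbol_le_one hτ ξ)

theorem integral_propagatorSymbol_mul_le_integral (hs : 1 < s) (hτ : 0 ≤ τ) :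
    ∫ ξ, propagatorSymbol τ ξ * (1 + ‖ξ‖ ^ 2) ^ (-s) ≤
      ∫ ξ : EuclideanSpace ℝ (Fin 2), (1 + ‖ξ‖ ^ 2) ^ (-s) :=
  integral_mono_of_nonneg
    (Filter.Eventually.of_forall fun ξ => by have := propagatorSymbol_pos τ ξ; positivity)
    (integrable_one_add_norm_sq_rpow_neg_fin_two hs)
    (Filter.Eventually.of_forall fun ξ =>
      mul_le_of_le_one_left (by positivity) (propagatorSymbol_le_one hτ ξ))

theorem integral_propagatorSymbol_mul_le (hs : 1 < s) (hτ : 0 < τ) :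
    ∫ ξ, propagatorSymbol τ ξ * (1 + ‖ξ‖ ^ 2) ^ (-s) ≤
      exp (-(τ / 2)) * (∫ ξ : EuclideanSpace ℝ (Fin 2), (1 + ‖ξ‖ ^ 2) ^ (-s)) +
        √(2 * π) * (∫ y : ℝ, |y| * (1 + y ^ 2) ^ (-s)) / √τ := by
  have hscale : √(π / (τ / 2)) * (∫ y : ℝ, |y| * (1 + y ^ 2) ^ (-s)) =
      √(2 * π) * (∫ y : ℝ, |y| * (1 + y ^ 2) ^ (-s)) / √τ := by
    rw [div_div_eq_mul_div, sqrt_div' _ hτ.le, mul_comm π 2]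
    ring
  rw [integral_eq_lintegral_of_nonneg_ae
    (Filter.Eventually.of_forall fun ξ => by have := propagatorSymbol_pos τ ξ; positivity)
    (by fun_prop)]
  refine ENNReal.toReal_le_of_le_ofReal (by positivity) ?_
  calc ∫⁻ ξ, ENNReal.ofReal (propagatorSymbol τ ξ * (1 + ‖ξ‖ ^ 2) ^ (-s))
      ≤ ∫⁻ ξ : EuclideanSpace ℝ (Fin 2),
          ENNReal.ofReal (exp (-(τ / 2)) * (1 + ‖ξ‖ ^ 2) ^ (-s)) +
            ENNReal.ofReal (exp (-(τ / 2 * ξ 0 ^ 2) / ξ 1 ^ 2) * (1 + ξ 1 ^ 2) ^ (-s)) :=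
        lintegral_mono fun ξ => by
          rw [← ENNReal.ofReal_add (by positivity) (by positivity)]
          exact ENNReal.ofReal_le_ofReal (propagatorSymbol_mul_le (by linarith) hτ.le ξ)
    _ = ENNReal.ofReal
            (exp (-(τ / 2)) * ∫ ξ : EuclideanSpace ℝ (Fin 2), (1 + ‖ξ‖ ^ 2) ^ (-s)) +
          ENNReal.ofReal (√(2 * π) * (∫ y : ℝ, |y| * (1 + y ^ 2) ^ (-s)) / √τ) := by
      rw [lintegral_add_left (by fun_prop),
        lintegral_exp_neg_mul_sq_div_sq_mul_one_add_sq_rpow_neg (by positivity) hs, hscale,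
        ← integral_const_mul (exp (-(τ / 2))), ofReal_integral_eq_lintegral_ofReal
          ((integrable_one_add_norm_sq_rpow_neg_fin_two hs).const_mul _)
          (Filter.Eventually.of_forall fun ξ => by positivity)]
    _ = _ := (ENNReal.ofReal_add (by positivity) (by positivity)).symm

theorem exists_integral_propagatorSymbol_mul_le (hs : 1 < s) :
    ∃ C > 0, ∀ τ, 0 ≤ τ →
      ∫ ξ, propagatorSymbol τ ξ * (1 + ‖ξ‖ ^ 2) ^ (-s) ≤
        C * (1 + τ) ^ (-(1 / 2) : ℝ) := by
  set I := ∫ ξ : EuclideanSpace ℝ (Fin 2), (1 + ‖ξ‖ ^ 2) ^ (-s)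
  set J := ∫ y : ℝ, |y| * (1 + y ^ 2) ^ (-s)
  have hI : 0 ≤ I := integral_nonneg fun ξ => by positivity
  have hJ : 0 ≤ J := integral_nonneg fun y => by positivity
  refine ⟨2 * (I + √(2 * π) * J) + 1, by positivity, fun τ hτ => ?_⟩
  refine (le_two_mul_add_mul_one_add_rpow_neg_half hI (by positivity) hτ
    (integral_propagatorSymbol_mul_le_integral hs hτ)
    (integral_propagatorSymbol_mul_le hs)).trans ?_
  gcongr
  linarith

end Decay

/-- Temporal decay of the linearized IPM propagator: for s > 1 there is C such that
∫ e^{−Nt ξ₁²/|ξ|²} |f(ξ)| dξ ≤ C (1+Nt)^{−1/4} ‖f‖_{H^s}. -/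
theorem propagator_decay_estimate (s : ℝ) (hs : 1 < s) :
    ∃ C > 0, ∀ N t : ℝ, 0 < N → 0 ≤ t →
      ∀ f : SchwartzMap (EuclideanSpace ℝ (Fin 2)) ℂ,
        (∫ ξ : EuclideanSpace ℝ (Fin 2),
            Real.exp (-(N * t * (ξ 0) ^ 2) / ‖ξ‖ ^ 2) * ‖f ξ‖) ≤
          C * (1 + N * t) ^ (-(1 / 4) : ℝ) *
            (∫ ξ : EuclideanSpace ℝ (Fin 2),
              (1 + ‖ξ‖ ^ 2) ^ s * ‖f ξ‖ ^ 2) ^ ((1 : ℝ) / 2) := by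
  obtain ⟨C, hC, hdecay⟩ := exists_integral_propagatorSymbol_mul_le hs
  refine ⟨C ^ (1 / 2 : ℝ), by positivity, fun N t hN ht f => ?_⟩
  set τ := N * t
  have hτ : 0 ≤ τ := by positivity
  have hsymbol_sq : ∀ ξ, propagatorSymbol τ ξ ^ 2 / (1 + ‖ξ‖ ^ 2) ^ s =
      propagatorSymbol (2 * τ) ξ * (1 + ‖ξ‖ ^ 2) ^ (-s) := fun ξ => by
    rw [propagatorSymbol_sq, rpow_neg (by positivity), div_eq_mul_inv]
  have hdecay₂ : ∫ ξ, propagatorSymbol (2 * τ) ξ * (1 + ‖ξ‖ ^ 2) ^ (-s) ≤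
      C * (1 + τ) ^ (-(1 / 2) : ℝ) :=
    (hdecay _ (by positivity)).trans (mul_le_mul_of_nonneg_left
      (rpow_le_rpow_of_nonpos (by positivity) (by linarith) (by norm_num)) hC.le)
  calc ∫ ξ, propagatorSymbol τ ξ * ‖f ξ‖
      ≤ (∫ ξ, propagatorSymbol τ ξ ^ 2 / (1 + ‖ξ‖ ^ 2) ^ s) ^ (1 / 2 : ℝ) *
          (∫ ξ, (1 + ‖ξ‖ ^ 2) ^ s * ‖f ξ‖ ^ 2) ^ (1 / 2 : ℝ) :=
        integral_mul_le_weighted_cauchy_schwarz (fun ξ => (propagatorSymbol_pos τ ξ).le)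
          (fun ξ => norm_nonneg _) (fun ξ => by positivity) (by fun_prop)
          f.continuous.norm.measurable (by fun_prop)
          (by simpa only [hsymbol_sq] using integrable_propagatorSymbol_mul hs (by positivity))
          (f.integrable_one_add_norm_sq_rpow_mul_norm_sq s)
    _ ≤ (C * (1 + τ) ^ (-(1 / 2) : ℝ)) ^ (1 / 2 : ℝ) *
          (∫ ξ, (1 + ‖ξ‖ ^ 2) ^ s * ‖f ξ‖ ^ 2) ^ (1 / 2 : ℝ) := by
        simp only [hsymbol_sq]
        gcongr
        exact integral_nonneg fun ξ => by have := propagatorSymbol_pos (2 * τ) ξ; positivity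
    _ = C ^ (1 / 2 : ℝ) * (1 + τ) ^ (-(1 / 4) : ℝ) *
          (∫ ξ, (1 + ‖ξ‖ ^ 2) ^ s * ‖f ξ‖ ^ 2) ^ (1 / 2 : ℝ) := by
        rw [mul_rpow hC.le (by positivity), ← rpow_mul (by positivity)]
        norm_num
end

section
/- Let s ≥ 1, j ∈ ℕ ∪ {0}, and ε > 0. Define g(ξ) = |ξ₁|^{−1/2+2ε} (1+|ξ|²)^{−s/2−1/4−2ε} on ℝ². Then there exists c > 0 such that for all N > 0 and t with Nt ≥ 1, ∫_{ℝ²} (|ξ₁|^j/|ξ|^j) e^{−N t ξ₁²/|ξ|²} g(ξ) dξ ≥ c (Nt)^{−(j/2 + 1/4 + ε)}. -/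
/-!
Write `a = (Nt)^{-1/2}`. On the box `ξ₁ ∈ [a/2, a]`, `ξ₂ ∈ [1, 2]` the heat factor
`e^{-Nt ξ₁²/|ξ|²}` is at least `e⁻¹`, `|ξ₁|/|ξ| ≍ a`, `|ξ₁|^{-1/2+2ε} ≍ a^{-1/2+2ε}` and the
Bessel factor is bounded below, so the box alone contributes `≳ a^j · a^{-1/2+2ε} · a`, which is
`(Nt)^{-(j/2+1/4+ε)}`. The integrand is nonnegative, and integrable because
`|ξ₁|^p (1+|ξ|²)^q ≤ |ξ₁|^p (1+ξ₁²)^{r₁} (1+ξ₂²)^{r₂}` for a splitting `q = r₁ + r₂` making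
both one-dimensional factors integrable, which is possible as `p + 2q < -2`.
-/

open MeasureTheory Real Set

theorem integrable_abs_rpow_mul_one_add_sq_rpow {p r : ℝ} (hp : -1 < p) (hpr : p + 2 * r < -1) :
    Integrable (fun x : ℝ => |x| ^ p * (1 + x ^ 2) ^ r) := by
  have hr : r ≤ 0 := by linarith
  have hf : AEStronglyMeasurable (fun x : ℝ => |x| ^ p * (1 + x ^ 2) ^ r) := by fun_prop
  have hIoi : IntegrableOn (fun x : ℝ => |x| ^ p * (1 + x ^ 2) ^ r) (Ioi 0) := by
    rw [← Ioo_union_Ici_eq_Ioi zero_lt_one, integrableOn_union,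
      integrableOn_Ici_iff_integrableOn_Ioi]
    constructor
    · refine ((intervalIntegral.integrableOn_Ioo_rpow_iff one_pos).2 hp).mono' hf.restrict ?_
      filter_upwards [ae_restrict_mem measurableSet_Ioo] with x (hx : x ∈ Ioo 0 1)
      rw [norm_of_nonneg (by positivity), abs_of_pos hx.1]
      exact mul_le_of_le_one_right (rpow_nonneg hx.1.le p)
        (rpow_le_one_of_one_le_of_nonpos (by nlinarith) hr)
    · refine (integrableOn_Ioi_rpow_of_lt hpr one_pos).mono' hf.restrict ?_
      filter_upwards [ae_restrict_mem measurableSet_Ioi] with x (hx : 1 < x)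
      have hx0 : 0 < x := one_pos.trans hx
      rw [norm_of_nonneg (by positivity), abs_of_pos hx0, rpow_add hx0, rpow_mul hx0.le]
      refine mul_le_mul_of_nonneg_left ?_ (rpow_nonneg hx0.le p)
      calc (1 + x ^ 2) ^ r ≤ (x ^ 2) ^ r :=
            rpow_le_rpow_of_nonpos (by positivity) (by linarith) hr
        _ = (x ^ (2 : ℝ)) ^ r := by norm_cast
  rw [← integrableOn_univ, ← Iio_union_Ici (a := (0 : ℝ)), integrableOn_union,
    integrableOn_Ici_iff_integrableOn_Ioi]
  refine ⟨?_, hIoi⟩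
  rw [← neg_zero] at hIoi
  simpa only [abs_neg, neg_sq] using hIoi.comp_neg_Iio

theorem integral_euclideanSpace_fin_two (f : ℝ → ℝ → ℝ) :
    ∫ ξ : EuclideanSpace ℝ (Fin 2), f (ξ 0) ‖ξ‖ = ∫ z : ℝ × ℝ, f z.1 √(z.1 ^ 2 + z.2 ^ 2) := by
  let e := (MeasurableEquiv.toLp 2 (Fin 2 → ℝ)).symm.trans MeasurableEquiv.finTwoArrow
  have he : MeasurePreserving e := (volume_preserving_finTwoArrow ℝ).comp
    (EuclideanSpace.volume_preserving_symm_measurableEquiv_toLp (Fin 2))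
  rw [← he.integral_comp e.measurableEmbedding]
  congr with ξ
  simp [e, EuclideanSpace.norm_eq, Fin.sum_univ_two]

/-- The integrand of the theorem with `x = ξ₁` and `ρ = |ξ|`. -/
noncomputable def propagatorIntegrand (l p q : ℝ) (j : ℕ) (x ρ : ℝ) : ℝ :=
  (|x| ^ j / ρ ^ j) * exp (-(l * x ^ 2) / ρ ^ 2) * (|x| ^ p * (1 + ρ ^ 2) ^ q)

theorem propagatorIntegrand_nonneg (l p q : ℝ) (j : ℕ) (x : ℝ) {ρ : ℝ} (hρ : 0 ≤ ρ) :
    0 ≤ propagatorIntegrand l p q j x ρ := by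
  unfold propagatorIntegrand
  positivity

theorem propagatorIntegrand_le {l x ρ : ℝ} (p q : ℝ) (j : ℕ) (hl : 0 ≤ l) (hxρ : |x| ≤ ρ) :
    propagatorIntegrand l p q j x ρ ≤ |x| ^ p * (1 + ρ ^ 2) ^ q := by
  have hρ : 0 ≤ ρ := (abs_nonneg x).trans hxρ
  have hratio : |x| ^ j / ρ ^ j ≤ 1 :=
    div_le_one_of_le₀ (pow_le_pow_left₀ (abs_nonneg x) hxρ j) (by positivity)
  have hexp : exp (-(l * x ^ 2) / ρ ^ 2) ≤ 1 :=
    exp_le_one_iff.2 (div_nonpos_of_nonpos_of_nonneg (by nlinarith [sq_nonneg x]) (sq_nonneg ρ))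
  unfold propagatorIntegrand
  calc _ ≤ 1 * 1 * (|x| ^ p * (1 + ρ ^ 2) ^ q) := by gcongr
    _ = _ := by ring

theorem one_add_sq_add_sq_rpow_add_le {r₁ r₂ : ℝ} (hr₁ : r₁ ≤ 0) (hr₂ : r₂ ≤ 0) (x y : ℝ) :
    (1 + (x ^ 2 + y ^ 2)) ^ (r₁ + r₂) ≤ (1 + x ^ 2) ^ r₁ * (1 + y ^ 2) ^ r₂ := by
  rw [rpow_add (by positivity)]
  gcongr ?_ * ?_
  · exact rpow_le_rpow_of_nonpos (by positivity) (by nlinarith [sq_nonneg y]) hr₁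
  · exact rpow_le_rpow_of_nonpos (by positivity) (by nlinarith [sq_nonneg x]) hr₂

theorem min_one_two_rpow_neg_mul_rpow_le_rpow {a x : ℝ} (p : ℝ) (ha : 0 < a)
    (hx : x ∈ Icc (a / 2) a) :
    min 1 (2 ^ (-p)) * a ^ p ≤ x ^ p := by
  have hx0 : 0 < x := (half_pos ha).trans_le hx.1
  rcases le_or_gt 0 p with hp | hp
  · calc min 1 (2 ^ (-p)) * a ^ p ≤ 2 ^ (-p) * a ^ p := by gcongr; exact min_le_right _ _
      _ = (a / 2) ^ p := by rw [div_rpow ha.le zero_le_two, rpow_neg zero_le_two]; ring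
      _ ≤ x ^ p := rpow_le_rpow (half_pos ha).le hx.1 hp
  · calc min 1 (2 ^ (-p)) * a ^ p ≤ 1 * a ^ p := by gcongr; exact min_le_left _ _
      _ = a ^ p := one_mul _
      _ ≤ x ^ p := rpow_le_rpow_of_nonpos hx0 hx.2 hp.le

theorem le_propagatorIntegrand {l p q a x ρ : ℝ} (j : ℕ) (hl : 0 ≤ l) (hq : q ≤ 0) (ha : 0 < a)
    (hla : l * a ^ 2 ≤ 1) (hx : x ∈ Icc (a / 2) a) (hρ : ρ ∈ Icc 1 3) :
    (a / 6) ^ j * exp (-1) * (min 1 (2 ^ (-p)) * a ^ p * 10 ^ q) ≤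
      propagatorIntegrand l p q j x ρ := by
  obtain ⟨hρ1, hρ3⟩ := hρ
  have hx0 : 0 < x := (half_pos ha).trans_le hx.1
  have hratio : (a / 6) ^ j ≤ |x| ^ j / ρ ^ j := by
    rw [← div_pow, abs_of_pos hx0]
    refine pow_le_pow_left₀ (by positivity) ?_ j
    calc a / 6 = (a / 2) / 3 := by ring
      _ ≤ x / ρ := div_le_div₀ hx0.le hx.1 (by linarith) hρ3
  have hexp : exp (-1) ≤ exp (-(l * x ^ 2) / ρ ^ 2) := by
    rw [exp_le_exp, neg_div, neg_le_neg_iff, div_le_one (by positivity)]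
    calc l * x ^ 2 ≤ l * a ^ 2 := by gcongr; exact hx.2
      _ ≤ 1 := hla
      _ ≤ ρ ^ 2 := by nlinarith
  have hprofile : min 1 (2 ^ (-p)) * a ^ p * 10 ^ q ≤ |x| ^ p * (1 + ρ ^ 2) ^ q := by
    rw [abs_of_pos hx0]
    exact mul_le_mul (min_one_two_rpow_neg_mul_rpow_le_rpow p ha hx)
      (rpow_le_rpow_of_nonpos (by positivity) (by nlinarith) hq) (by positivity) (by positivity)
  unfold propagatorIntegrand
  gcongr

theorem integrable_propagatorIntegrand {l p q : ℝ} (j : ℕ) (hl : 0 ≤ l) (hp : -1 < p)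
    (hpq : p + 2 * q < -2) :
    Integrable (fun z : ℝ × ℝ => propagatorIntegrand l p q j z.1 √(z.1 ^ 2 + z.2 ^ 2)) := by
  obtain ⟨r₁, r₂, rfl, hr₁, hr₂⟩ : ∃ r₁ r₂, q = r₁ + r₂ ∧ p + 2 * r₁ < -1 ∧ 2 * r₂ < -1 :=
    ⟨(-1 - p) / 2 - (-2 - p - 2 * q) / 4, q - ((-1 - p) / 2 - (-2 - p - 2 * q) / 4), by ring,
      by linarith, by linarith⟩
  have hsnd : Integrable (fun y : ℝ => (1 + y ^ 2) ^ r₂) := by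
    simpa using integrable_abs_rpow_mul_one_add_sq_rpow (p := 0) (by norm_num) (by linarith)
  have hmajorant : Integrable
      (fun z : ℝ × ℝ => |z.1| ^ p * (1 + z.1 ^ 2) ^ r₁ * (1 + z.2 ^ 2) ^ r₂) :=
    (integrable_abs_rpow_mul_one_add_sq_rpow hp hr₁).mul_prod hsnd
  refine hmajorant.mono' (by unfold propagatorIntegrand; fun_prop) (.of_forall fun z => ?_)
  have hsum : 0 ≤ z.1 ^ 2 + z.2 ^ 2 := by positivity
  have hz : |z.1| ≤ √(z.1 ^ 2 + z.2 ^ 2) := by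
    rw [← sqrt_sq_eq_abs]; exact sqrt_le_sqrt (by nlinarith [sq_nonneg z.2])
  rw [norm_of_nonneg (propagatorIntegrand_nonneg _ _ _ _ _ (sqrt_nonneg _))]
  calc _ ≤ |z.1| ^ p * (1 + (z.1 ^ 2 + z.2 ^ 2)) ^ (r₁ + r₂) := by
        simpa [sq_sqrt hsum] using propagatorIntegrand_le p (r₁ + r₂) j hl hz
    _ ≤ _ := by
        rw [mul_assoc]
        exact mul_le_mul_of_nonneg_left
          (one_add_sq_add_sq_rpow_add_le (by linarith) (by linarith) _ _) (by positivity)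

theorem le_integral_propagatorIntegrand {l p q : ℝ} (j : ℕ) (hl : 1 ≤ l) (hq : q ≤ 0)
    (hint : Integrable (fun z : ℝ × ℝ => propagatorIntegrand l p q j z.1 √(z.1 ^ 2 + z.2 ^ 2))) :
    6⁻¹ ^ j * exp (-1) * min 1 (2 ^ (-p)) * 10 ^ q / 2 * l ^ (-((j + p + 1) / 2)) ≤
      ∫ z : ℝ × ℝ, propagatorIntegrand l p q j z.1 √(z.1 ^ 2 + z.2 ^ 2) := by
  have hl0 : 0 < l := one_pos.trans_le hl
  set a := l ^ (-(1 / 2 : ℝ))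
  have ha : 0 < a := rpow_pos_of_pos hl0 _
  have ha1 : a ≤ 1 := rpow_le_one_of_one_le_of_nonpos hl (by norm_num)
  have hla : l * a ^ 2 = 1 := by
    rw [← rpow_natCast, ← rpow_mul hl0.le, show -(1 / 2 : ℝ) * (2 : ℕ) = -1 by norm_num,
      rpow_neg_one, mul_inv_cancel₀ hl0.ne']
  have hpow : a ^ j * a ^ p * a = l ^ (-((j + p + 1) / 2)) := by
    rw [← rpow_natCast, ← rpow_add ha, ← rpow_add_one ha.ne', ← rpow_mul hl0.le]
    ring_nf
  set S := Icc (a / 2) a ×ˢ Icc (1 : ℝ) 2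
  have hS : volume.real S = a / 2 := by
    rw [Measure.volume_eq_prod, measureReal_prod_prod, volume_real_Icc_of_le (by linarith),
      volume_real_Icc_of_le one_le_two]
    ring
  have hbound : ∀ z ∈ S, (a / 6) ^ j * exp (-1) * (min 1 (2 ^ (-p)) * a ^ p * 10 ^ q) ≤
      propagatorIntegrand l p q j z.1 √(z.1 ^ 2 + z.2 ^ 2) := by
    rintro z ⟨hx, hy⟩
    refine le_propagatorIntegrand j hl0.le hq ha hla.le hx ⟨?_, ?_⟩
    · exact le_sqrt_of_sq_le (by nlinarith [hy.1])
    · exact (sqrt_le_left (by norm_num)).2 (by nlinarith [hx.1, hx.2, hy.1, hy.2])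
  calc _ = (a / 6) ^ j * exp (-1) * (min 1 (2 ^ (-p)) * a ^ p * 10 ^ q) * volume.real S := by
        rw [hS, ← hpow]; ring
    _ ≤ ∫ z in S, propagatorIntegrand l p q j z.1 √(z.1 ^ 2 + z.2 ^ 2) :=
        setIntegral_ge_of_const_le_real (measurableSet_Icc.prod measurableSet_Icc)
          (isCompact_Icc.prod isCompact_Icc).measure_lt_top.ne hbound hint.integrableOn
    _ ≤ _ := setIntegral_le_integral hint
        (.of_forall fun _ => propagatorIntegrand_nonneg _ _ _ _ _ (sqrt_nonneg _))

/-- Sharpness of the decay rates: lower bound for the linear propagator applied to the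
explicit profile g(ξ) = |ξ₁|^{−1/2+2ε}(1+|ξ|²)^{−s/2−1/4−2ε}. -/
theorem propagator_sharp_lower_bound (s : ℝ) (hs : 1 ≤ s) (j : ℕ) (ε : ℝ) (hε : 0 < ε) :
    ∃ c > 0, ∀ N t : ℝ, 0 < N → 1 ≤ N * t →
      c * (N * t) ^ (-((j : ℝ) / 2 + 1 / 4 + ε)) ≤
        ∫ ξ : EuclideanSpace ℝ (Fin 2),
          (|ξ 0| ^ j / ‖ξ‖ ^ j) * Real.exp (-(N * t * (ξ 0) ^ 2) / ‖ξ‖ ^ 2) *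
            (|ξ 0| ^ (-(1 / 2 : ℝ) + 2 * ε) *
              (1 + ‖ξ‖ ^ 2) ^ (-(s / 2) - 1 / 4 - 2 * ε)) := by
  set p : ℝ := -(1 / 2 : ℝ) + 2 * ε with hp
  set q : ℝ := -(s / 2) - 1 / 4 - 2 * ε with hq
  refine ⟨6⁻¹ ^ j * exp (-1) * min 1 (2 ^ (-p)) * 10 ^ q / 2, by positivity, ?_⟩
  intro N t _ hNt
  have hint := integrable_propagatorIntegrand (q := q) j (zero_le_one.trans hNt)
    (by linarith : -1 < p) (by linarith)
  rw [show -((j : ℝ) / 2 + 1 / 4 + ε) = -((j + p + 1) / 2) by rw [hp]; ring]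
  change _ ≤ ∫ ξ : EuclideanSpace ℝ (Fin 2), propagatorIntegrand (N * t) p q j (ξ 0) ‖ξ‖
  rw [integral_euclideanSpace_fin_two]
  exact le_integral_propagatorIntegrand j hNt (by linarith) hint
end
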